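/- Let X be a finite set, K : X × X → ℝ a kernel, and p, q probability distributions on X. Let N, M ≥ 2, and let X₁,…,X_N be i.i.d. random variables with law p and Y₁,…,Y_M i.i.d. with law q, all N + M variables mutually independent. Then the estimator (1/(N(N−1))) Σ_{i≠j} K(X_i,X_j) − (2/(NM)) Σ_{i,j} K(X_i,Y_j) + (1/(M(M−1))) Σ_{i≠j} K(Y_i,Y_j) is unbiased: its expectation equals MMD²(p,q). -/

import Mathlib

open MeasureTheory ProbabilityTheory

/-- The squared maximum mean discrepancy between distributions `p, q` on a finite set,
with respect to a kernel `K`. -/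
noncomputable def mmdSq {X : Type*} [Fintype X] (K : X → X → ℝ) (p q : X → ℝ) : ℝ :=
  ∑ x, ∑ y, p x * p y * K x y - 2 * ∑ x, ∑ y, p x * q y * K x y
    + ∑ x, ∑ y, q x * q y * K x y

/-!
By linearity of expectation it suffices to compute `E[K(U, V)]` for each pair of summands.
Every pair in the estimator consists of two *independent* variables (the diagonal `i = j` is
excluded), so the joint law is the product law and `E[K(U, V)] = ∑ x, ∑ y, p x * q y * K x y`.
The normalising constants are exactly the numbers of summands `N(N-1)`, `NM` and `M(M-1)`.
-/

open Finset

section FiniteValued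

variable {Ω α β : Type*} [MeasurableSpace Ω] {μ : Measure Ω} [IsFiniteMeasure μ]
  [Fintype α] [MeasurableSpace α] [MeasurableSingletonClass α]
  [Fintype β] [MeasurableSpace β] [MeasurableSingletonClass β]

lemma integrable_comp_of_fintype (f : α → β → ℝ) {U : Ω → α} {V : Ω → β}
    (hU : Measurable U) (hV : Measurable V) :
    Integrable (fun ω => f (U ω) (V ω)) μ :=
  (Integrable.of_finite (f := Function.uncurry f)).comp_measurable (hU.prodMk hV)

lemma integrable_sum_sum_comp_of_fintype {ι κ : Type*} (f : α → β → ℝ) (s : Finset ι)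
    (t : ι → Finset κ) {U : ι → Ω → α} {V : κ → Ω → β}
    (hU : ∀ i, Measurable (U i)) (hV : ∀ j, Measurable (V j)) :
    Integrable (fun ω => ∑ i ∈ s, ∑ j ∈ t i, f (U i ω) (V j ω)) μ :=
  integrable_finsetSum _ fun i _ => integrable_finsetSum _ fun j _ =>
    integrable_comp_of_fintype f (hU i) (hV j)

lemma ProbabilityTheory.IndepFun.integral_comp_of_fintype (f : α → β → ℝ)
    {U : Ω → α} {V : Ω → β} (hU : Measurable U) (hV : Measurable V) (hUV : IndepFun U V μ) :
    ∫ ω, f (U ω) (V ω) ∂μ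
      = ∑ x, ∑ y, μ.real (U ⁻¹' {x}) * μ.real (V ⁻¹' {y}) * f x y := by
  have hUV_meas : Measurable fun ω => (U ω, V ω) := hU.prodMk hV
  have hpoint (x : α) (y : β) :
      (μ.map fun ω => (U ω, V ω)).real {(x, y)} = μ.real (U ⁻¹' {x}) * μ.real (V ⁻¹' {y}) := by
    rw [measureReal_def, Measure.map_apply hUV_meas (measurableSet_singleton _),
      ← Set.singleton_prod_singleton, Set.mk_preimage_prod,
      hUV.measure_inter_preimage_eq_mul _ _ (measurableSet_singleton x)
        (measurableSet_singleton y), ENNReal.toReal_mul, measureReal_def, measureReal_def]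
  change ∫ ω, Function.uncurry f (U ω, V ω) ∂μ = _
  rw [← integral_map hUV_meas.aemeasurable (f := Function.uncurry f)
      (measurable_of_finite _).aestronglyMeasurable, integral_fintype Integrable.of_finite,
    Fintype.sum_prod_type]
  simp only [hpoint, smul_eq_mul, Function.uncurry_apply_pair]

lemma integral_sum_sum_comp_of_indepFun {ι κ : Type*} (f : α → β → ℝ) (s : Finset ι)
    (t : ι → Finset κ) {U : ι → Ω → α} {V : κ → Ω → β} {p : α → ℝ} {q : β → ℝ}
    (hU : ∀ i, Measurable (U i)) (hV : ∀ j, Measurable (V j))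
    (hUlaw : ∀ i x, μ.real (U i ⁻¹' {x}) = p x) (hVlaw : ∀ j y, μ.real (V j ⁻¹' {y}) = q y)
    (hindep : ∀ i ∈ s, ∀ j ∈ t i, IndepFun (U i) (V j) μ) :
    ∫ ω, ∑ i ∈ s, ∑ j ∈ t i, f (U i ω) (V j ω) ∂μ
      = (∑ i ∈ s, #(t i) : ℝ) * ∑ x, ∑ y, p x * q y * f x y := by
  rw [integral_finsetSum _ fun i _ => integrable_finsetSum _ fun j _ =>
    integrable_comp_of_fintype f (hU i) (hV j), sum_mul]
  refine sum_congr rfl fun i hi => ?_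
  rw [integral_finsetSum _ fun j _ => integrable_comp_of_fintype f (hU i) (hV j)]
  rw [sum_congr rfl fun j hj => (hindep i hi j hj).integral_comp_of_fintype f (hU i) (hV j)]
  simp only [hUlaw, hVlaw, sum_const, nsmul_eq_mul]

lemma integral_sum_sum_erase_comp_of_pairwise_indepFun {ι : Type*} [Fintype ι] [DecidableEq ι]
    (f : α → α → ℝ) {Z : ι → Ω → α} {p : α → ℝ} (hZ : ∀ i, Measurable (Z i))
    (hlaw : ∀ i x, μ.real (Z i ⁻¹' {x}) = p x)
    (hindep : Pairwise fun i j => IndepFun (Z i) (Z j) μ) :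
    ∫ ω, ∑ i, ∑ j ∈ univ.erase i, f (Z i ω) (Z j ω) ∂μ
      = Fintype.card ι * (Fintype.card ι - 1) * ∑ x, ∑ y, p x * p y * f x y := by
  rw [integral_sum_sum_comp_of_indepFun f _ _ hZ hZ hlaw hlaw fun i _ j hj =>
    hindep (ne_of_mem_erase hj).symm]
  congr 1
  rcases isEmpty_or_nonempty ι with hι | hι
  · simp
  · simp [Nat.cast_sub Fintype.card_pos, mul_sub_one]

end FiniteValued

theorem mmd_estimator_unbiased_general
    {X : Type*} [Fintype X] [MeasurableSpace X]
    [MeasurableSingletonClass X]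
    (K : X → X → ℝ) (p q : X → ℝ)
    (hp0 : ∀ x, 0 ≤ p x)
    (hq0 : ∀ x, 0 ≤ q x)
    (N M : ℕ) (hN : 2 ≤ N) (hM : 2 ≤ M)
    {Ω : Type*} [MeasurableSpace Ω] (μ : Measure Ω) [IsProbabilityMeasure μ]
    (Xv : Fin N → Ω → X) (Yv : Fin M → Ω → X)
    (hXmeas : ∀ i, Measurable (Xv i)) (hYmeas : ∀ j, Measurable (Yv j))
    (hXlaw : ∀ i x, μ (Xv i ⁻¹' {x}) = ENNReal.ofReal (p x))
    (hYlaw : ∀ j y, μ (Yv j ⁻¹' {y}) = ENNReal.ofReal (q y))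
    (hindep : iIndepFun
      (Sum.elim Xv Yv) μ) :
    ∫ ω, ((1 / ((N : ℝ) * ((N : ℝ) - 1))) *
            ∑ i, ∑ j ∈ Finset.univ.erase i, K (Xv i ω) (Xv j ω)
          - (2 / ((N : ℝ) * (M : ℝ))) * ∑ i, ∑ j, K (Xv i ω) (Yv j ω)
          + (1 / ((M : ℝ) * ((M : ℝ) - 1))) *
            ∑ i, ∑ j ∈ Finset.univ.erase i, K (Yv i ω) (Yv j ω)) ∂μ
      = mmdSq K p q := by
  have hXlaw' (i : Fin N) (x : X) : μ.real (Xv i ⁻¹' {x}) = p x := by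
    simp [measureReal_def, hXlaw, hp0]
  have hYlaw' (j : Fin M) (y : X) : μ.real (Yv j ⁻¹' {y}) = q y := by
    simp [measureReal_def, hYlaw, hq0]
  have hXX := integral_sum_sum_erase_comp_of_pairwise_indepFun K hXmeas hXlaw'
    fun i j hij => hindep.indepFun (Sum.inl_injective.ne hij)
  have hYY := integral_sum_sum_erase_comp_of_pairwise_indepFun K hYmeas hYlaw'
    fun i j hij => hindep.indepFun (Sum.inr_injective.ne hij)
  have hXY := integral_sum_sum_comp_of_indepFun K univ (fun _ => univ) hXmeas hYmeas hXlaw'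
    hYlaw' fun i _ j _ => hindep.indepFun Sum.inl_ne_inr
  have hN1 : (N : ℝ) - 1 ≠ 0 := by
    rw [sub_ne_zero]; exact_mod_cast (by omega : N ≠ 1)
  have hM1 : (M : ℝ) - 1 ≠ 0 := by
    rw [sub_ne_zero]; exact_mod_cast (by omega : M ≠ 1)
  have hintXX := integrable_sum_sum_comp_of_fintype (μ := μ) K univ (fun i => univ.erase i)
    hXmeas hXmeas
  have hintXY := integrable_sum_sum_comp_of_fintype (μ := μ) K univ (fun _ => univ) hXmeas hYmeas
  have hintYY := integrable_sum_sum_comp_of_fintype (μ := μ) K univ (fun i => univ.erase i)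
    hYmeas hYmeas
  rw [integral_add ?_ (hintYY.const_mul _), integral_sub (hintXX.const_mul _)
    (hintXY.const_mul _), integral_const_mul, integral_const_mul, integral_const_mul,
    hXX, hXY, hYY, mmdSq]
  · simp only [Fintype.card_fin, sum_const, card_univ, nsmul_eq_mul]
    field_simp
  · exact (hintXX.const_mul _).sub (hintXY.const_mul _)

/-- Let `X` be a finite set, `K : X × X → ℝ` a kernel, and `p, q` probability distributions
on `X`.  Let `N, M ≥ 2` and let `X₁, …, X_N` be i.i.d. random variables with law `p` and
`Y₁, …, Y_M` i.i.d. with law `q`, all `N + M` variables mutually independent.  Then the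
estimator
`(1/(N(N-1))) ∑_{i≠j} K(Xᵢ,Xⱼ) - (2/(NM)) ∑_{i,j} K(Xᵢ,Yⱼ) + (1/(M(M-1))) ∑_{i≠j} K(Yᵢ,Yⱼ)`
is unbiased: its expectation equals `MMD²(p,q)`. -/
theorem mmd_estimator_unbiased
    {X : Type*} [Fintype X] [DecidableEq X] [MeasurableSpace X]
    [MeasurableSingletonClass X]
    (K : X → X → ℝ) (p q : X → ℝ)
    (hp0 : ∀ x, 0 ≤ p x) (hp1 : ∑ x, p x = 1)
    (hq0 : ∀ x, 0 ≤ q x) (hq1 : ∑ x, q x = 1)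
    (N M : ℕ) (hN : 2 ≤ N) (hM : 2 ≤ M)
    {Ω : Type*} [MeasurableSpace Ω] (μ : Measure Ω) [IsProbabilityMeasure μ]
    (Xv : Fin N → Ω → X) (Yv : Fin M → Ω → X)
    (hXmeas : ∀ i, Measurable (Xv i)) (hYmeas : ∀ j, Measurable (Yv j))
    (hXlaw : ∀ i x, μ (Xv i ⁻¹' {x}) = ENNReal.ofReal (p x))
    (hYlaw : ∀ j y, μ (Yv j ⁻¹' {y}) = ENNReal.ofReal (q y))
    (hindep : iIndepFun
      (Sum.elim Xv Yv) μ) :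
    ∫ ω, ((1 / ((N : ℝ) * ((N : ℝ) - 1))) *
            ∑ i, ∑ j ∈ Finset.univ.erase i, K (Xv i ω) (Xv j ω)
          - (2 / ((N : ℝ) * (M : ℝ))) * ∑ i, ∑ j, K (Xv i ω) (Yv j ω)
          + (1 / ((M : ℝ) * ((M : ℝ) - 1))) *
            ∑ i, ∑ j ∈ Finset.univ.erase i, K (Yv i ω) (Yv j ω)) ∂μ
      = mmdSq K p q :=
  mmd_estimator_unbiased_general K p q hp0 hq0 N M hN hM μ Xv Yv hXmeas hYmeas hXlaw hYlaw hindep
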